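/- arXiv:2301.08544 — 5 statements merged into one kernel-verified Lean document; each statement's English description precedes it below -/
import Mathlib

section
/- For all real numbers p, q with c ≤ p ≤ 1−c and c ≤ q ≤ 1−c (where 0 < c ≤ 1/2), we have √((1−p)(1−q)) + √(pq) ≥ 1 − (p−q)²/(4c(1−c)). -/
/-!
Bound each square root from below by a harmonic mean, `√(ab) ≥ 2ab/(a+b)`. With `s = p + q`
the two harmonic means add up to exactly `1 - (p-q)²/(s(2-s))`, and `s ∈ [2c, 2-2c]` forces
`s(2-s) ≥ 4c(1-c)`.
-/

lemma two_mul_mul_div_add_le_sqrt_mul {a b : ℝ} (ha : 0 ≤ a) (hb : 0 ≤ b) :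
    2 * a * b / (a + b) ≤ √(a * b) := by
  rcases (add_nonneg ha hb).eq_or_lt with hab | hab
  · simp [← hab]
  have hsq : √(a * b) ^ 2 = a * b := Real.sq_sqrt (mul_nonneg ha hb)
  have hamgm : 2 * √(a * b) ≤ a + b := by
    nlinarith [sq_nonneg (a - b), Real.sqrt_nonneg (a * b)]
  rw [div_le_iff₀ hab]
  nlinarith [Real.sqrt_nonneg (a * b)]

lemma harmonic_means_add_eq {p q : ℝ} (hs : p + q ≠ 0) (hs' : (1 - p) + (1 - q) ≠ 0) :
    2 * p * q / (p + q) + 2 * (1 - p) * (1 - q) / ((1 - p) + (1 - q)) =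
      1 - (p - q) ^ 2 / ((p + q) * ((1 - p) + (1 - q))) := by
  field_simp
  ring

lemma four_mul_mul_one_sub_le {c p q : ℝ} (hp : c ≤ p) (hp' : p ≤ 1 - c) (hq : c ≤ q)
    (hq' : q ≤ 1 - c) :
    4 * c * (1 - c) ≤ (p + q) * ((1 - p) + (1 - q)) := by
  nlinarith [mul_nonneg (by linarith : 0 ≤ p + q - 2 * c) (by linarith : 0 ≤ 2 - 2 * c - (p + q))]

theorem stmt_0_general (c p q : ℝ) (hc : 0 < c)
    (hp : c ≤ p) (hp' : p ≤ 1 - c) (hq : c ≤ q) (hq' : q ≤ 1 - c) :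
    Real.sqrt ((1 - p) * (1 - q)) + Real.sqrt (p * q) ≥
      1 - (p - q) ^ 2 / (4 * c * (1 - c)) := by
  have hc_pos : 0 < 4 * c * (1 - c) := by nlinarith
  have hden := four_mul_mul_one_sub_le hp hp' hq hq'
  have hs : 0 < p + q := by linarith
  have hs' : 0 < (1 - p) + (1 - q) := by linarith
  have hpq := two_mul_mul_div_add_le_sqrt_mul (a := p) (b := q) (by linarith) (by linarith)
  have hpq' := two_mul_mul_div_add_le_sqrt_mul (a := 1 - p) (b := 1 - q) (by linarith)
    (by linarith)
  have herr : (p - q) ^ 2 / ((p + q) * ((1 - p) + (1 - q))) ≤ (p - q) ^ 2 / (4 * c * (1 - c)) :=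
    div_le_div_of_nonneg_left (sq_nonneg _) hc_pos hden
  rw [ge_iff_le]
  calc 1 - (p - q) ^ 2 / (4 * c * (1 - c))
      ≤ 1 - (p - q) ^ 2 / ((p + q) * ((1 - p) + (1 - q))) := by linarith
    _ = 2 * p * q / (p + q) + 2 * (1 - p) * (1 - q) / ((1 - p) + (1 - q)) :=
        (harmonic_means_add_eq hs.ne' hs'.ne').symm
    _ ≤ √((1 - p) * (1 - q)) + √(p * q) := by linarith

theorem stmt_0 (c p q : ℝ) (hc : 0 < c) (hc' : c ≤ 1/2)
    (hp : c ≤ p) (hp' : p ≤ 1 - c) (hq : c ≤ q) (hq' : q ≤ 1 - c) :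
    Real.sqrt ((1 - p) * (1 - q)) + Real.sqrt (p * q) ≥
      1 - (p - q) ^ 2 / (4 * c * (1 - c)) :=
  stmt_0_general c p q hc hp hp' hq hq'
end

section
/- For all real numbers p, q with c ≤ p ≤ 1−c and c ≤ q ≤ 1−c (where 0 < c ≤ 1/2), we have |√((1−p)q) − √((1−q)p)| ≤ |p−q| / (2√(c(1−c))). -/
theorem stmt_1 (c p q : ℝ) (hc : 0 < c) (hc' : c ≤ 1/2)
    (hp : c ≤ p) (hp' : p ≤ 1 - c) (hq : c ≤ q) (hq' : q ≤ 1 - c) :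
    |Real.sqrt ((1 - p) * q) - Real.sqrt ((1 - q) * p)| ≤
      |p - q| / (2 * Real.sqrt (c * (1 - c))) := by
  set x := Real.sqrt ((1 - p) * q) with hx
  set y := Real.sqrt ((1 - q) * p) with hy
  set s := Real.sqrt (c * (1 - c)) with hs
  have hcc : 0 < c * (1 - c) := by nlinarith
  have hxnn : 0 ≤ x := Real.sqrt_nonneg _
  have hynn : 0 ≤ y := Real.sqrt_nonneg _
  have hspos : 0 < s := Real.sqrt_pos.2 hcc
  have hx2 : x ^ 2 = (1 - p) * q := Real.sq_sqrt (by nlinarith)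
  have hy2 : y ^ 2 = (1 - q) * p := Real.sq_sqrt (by nlinarith)
  have hs2 : s ^ 2 = c * (1 - c) := Real.sq_sqrt hcc.le
  have h1 : c * (1 - c) ≤ p * (1 - p) := by nlinarith
  have h2 : c * (1 - c) ≤ q * (1 - q) := by nlinarith
  have hprod : (c * (1 - c)) * (c * (1 - c)) ≤ (p * (1 - p)) * (q * (1 - q)) :=
    mul_le_mul h1 h2 hcc.le (by nlinarith)
  have hxy : s ^ 2 ≤ x * y := by
    nlinarith [mul_nonneg hxnn hynn, hprod, hx2, hy2, hs2, hspos.le]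
  have hsum : 2 * s ≤ x + y := by
    nlinarith [sq_nonneg (x - y), hxy, hspos.le, hxnn, hynn]
  have key : (x - y) * (x + y) = q - p := by
    have : (x - y) * (x + y) = x ^ 2 - y ^ 2 := by ring
    rw [this, hx2, hy2]; ring
  rw [le_div_iff₀ (by positivity)]
  have habs : |p - q| = |x - y| * (x + y) := by
    rw [abs_sub_comm p q, ← key, abs_mul, abs_of_nonneg (by linarith : (0:ℝ) ≤ x + y)]
  rw [habs]
  exact mul_le_mul_of_nonneg_left hsum (abs_nonneg _)
end

section
/- Let p₀ > p₁ > p₂ ≥ p₃ ≥ … ≥ p_N be reals in [0,1] with p₀ − p₁ = p₁ − p₂, and set Δᵢ = p₀ − pᵢ for i ≥ 1. Define H⁰ = ∑_{i≥2} (p₁ − pᵢ)⁻² and, for 1 ≤ j ≤ N, Hʲ = ∑_{1≤i≤N, i≠j} (p₀ − pᵢ)⁻². Then for every j with 1 ≤ j ≤ N, (1/4)·H⁰ ≤ Hʲ ≤ 2·H⁰. -/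
/-!
Write δ = p₀ − p₁ and aᵢ = p₁ − pᵢ. Monotonicity and the equal gap give δ = a₂ ≤ aᵢ for i ≥ 2,
so p₀ − pᵢ = δ + aᵢ lies between aᵢ and 2aᵢ, and each term (p₀ − pᵢ)⁻² of Hʲ lies between
aᵢ⁻² / 4 and aᵢ⁻². The remaining term δ⁻² of Hʲ (for j ≥ 2) is the term i = 2 of H⁰, hence at
most H⁰, and it dominates the term a_j⁻² that Hʲ misses from H⁰.
-/

open Finset

lemma inv_sq_add_le_inv_sq {d a : ℝ} (hd : 0 ≤ d) (ha : 0 < a) :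
    ((d + a) ^ 2)⁻¹ ≤ (a ^ 2)⁻¹ :=
  inv_anti₀ (by positivity) (by nlinarith)

lemma quarter_mul_inv_sq_le_inv_sq_add {d a : ℝ} (hd : 0 ≤ d) (hda : d ≤ a) :
    1 / 4 * (a ^ 2)⁻¹ ≤ ((d + a) ^ 2)⁻¹ := by
  rcases (hd.trans hda).eq_or_lt with rfl | ha
  · simp [le_antisymm hda hd]
  calc 1 / 4 * (a ^ 2)⁻¹ = ((2 * a) ^ 2)⁻¹ := by field_simp; ring
    _ ≤ ((d + a) ^ 2)⁻¹ := inv_anti₀ (by positivity) (by nlinarith)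

section
variable {ι : Type*} (s : Finset ι) (p : ι → ℝ) {x y : ℝ}

lemma sum_inv_sq_sub_le_of_le (hyx : y ≤ x) (hp : ∀ i ∈ s, p i < y) :
    ∑ i ∈ s, ((x - p i) ^ 2)⁻¹ ≤ ∑ i ∈ s, ((y - p i) ^ 2)⁻¹ :=
  sum_le_sum fun i hi => by
    simpa using inv_sq_add_le_inv_sq (sub_nonneg.2 hyx) (sub_pos.2 (hp i hi))

lemma quarter_mul_sum_inv_sq_sub_le (hyx : y ≤ x) (hp : ∀ i ∈ s, x - y ≤ y - p i) :
    1 / 4 * ∑ i ∈ s, ((y - p i) ^ 2)⁻¹ ≤ ∑ i ∈ s, ((x - p i) ^ 2)⁻¹ := by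
  rw [mul_sum]
  exact sum_le_sum fun i hi => by
    simpa using quarter_mul_inv_sq_le_inv_sq_add (sub_nonneg.2 hyx) (hp i hi)

lemma quarter_mul_sum_le_inv_sq_add_sum_erase [DecidableEq ι] {j : ι} (hyx : y < x)
    (hj : j ∈ s) (hp : ∀ i ∈ s, x - y ≤ y - p i) :
    1 / 4 * ∑ i ∈ s, ((y - p i) ^ 2)⁻¹ ≤
      ((x - y) ^ 2)⁻¹ + ∑ i ∈ s.erase j, ((x - p i) ^ 2)⁻¹ := by
  rw [← add_sum_erase s _ hj, mul_add]
  refine add_le_add ?_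
    (quarter_mul_sum_inv_sq_sub_le _ p hyx.le fun i hi => hp i (mem_of_mem_erase hi))
  have hj' : ((y - p j) ^ 2)⁻¹ ≤ ((x - y) ^ 2)⁻¹ :=
    inv_anti₀ (by nlinarith) (pow_le_pow_left₀ (by linarith) (hp j hj) 2)
  linarith [inv_nonneg.2 (sq_nonneg (y - p j))]

lemma inv_sq_add_sum_erase_le_two_mul_sum [DecidableEq ι] (j : ι) {k : ι} (hyx : y ≤ x)
    (hk : k ∈ s) (hpk : y - p k = x - y) (hp : ∀ i ∈ s, p i < y) :
    ((x - y) ^ 2)⁻¹ + ∑ i ∈ s.erase j, ((x - p i) ^ 2)⁻¹ ≤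
      2 * ∑ i ∈ s, ((y - p i) ^ 2)⁻¹ := by
  have hnonneg : ∀ i ∈ s, 0 ≤ ((y - p i) ^ 2)⁻¹ := fun i _ => inv_nonneg.2 (sq_nonneg _)
  rw [two_mul]
  refine add_le_add (hpk ▸ single_le_sum hnonneg hk) ?_
  calc ∑ i ∈ s.erase j, ((x - p i) ^ 2)⁻¹ ≤ ∑ i ∈ s.erase j, ((y - p i) ^ 2)⁻¹ :=
        sum_inv_sq_sub_le_of_le _ p hyx fun i hi => hp i (mem_of_mem_erase hi)
    _ ≤ ∑ i ∈ s, ((y - p i) ^ 2)⁻¹ :=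
        sum_le_sum_of_subset_of_nonneg (erase_subset _ _) fun i hi _ => hnonneg i hi

end

theorem stmt_9_general (N : ℕ) (p : ℕ → ℝ)
    (h01 : p 1 < p 0)
    (hmono : ∀ i j, 2 ≤ i → i ≤ j → j ≤ N → p j ≤ p i)
    (hgap : p 0 - p 1 = p 1 - p 2) :
    ∀ j, 1 ≤ j → j ≤ N →
      (1 / 4) * (∑ i ∈ Finset.Icc 2 N, ((p 1 - p i) ^ 2)⁻¹) ≤
          (∑ i ∈ (Finset.Icc 1 N).erase j, ((p 0 - p i) ^ 2)⁻¹) ∧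
        (∑ i ∈ (Finset.Icc 1 N).erase j, ((p 0 - p i) ^ 2)⁻¹) ≤
          2 * ∑ i ∈ Finset.Icc 2 N, ((p 1 - p i) ^ 2)⁻¹ := by
  intro j hj1 hjN
  have hgap_le : ∀ i ∈ Icc 2 N, p 0 - p 1 ≤ p 1 - p i := fun i hi => by
    linarith [hmono 2 i le_rfl (mem_Icc.1 hi).1 (mem_Icc.1 hi).2]
  have hlt : ∀ i ∈ Icc 2 N, p i < p 1 := fun i hi => by linarith [hgap_le i hi]
  rcases hj1.eq_or_lt with rfl | hj2
  · rw [Icc_erase_left, ← Icc_add_one_left_eq_Ioc]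
    exact ⟨quarter_mul_sum_inv_sq_sub_le _ p h01.le hgap_le,
      (sum_inv_sq_sub_le_of_le _ p h01.le hlt).trans
        (le_mul_of_one_le_left (sum_nonneg fun i _ => inv_nonneg.2 (sq_nonneg _)) one_le_two)⟩
  · have hjs : j ∈ Icc 2 N := mem_Icc.2 ⟨hj2, hjN⟩
    have herase : (Icc 1 N).erase j = insert 1 ((Icc 2 N).erase j) := by
      ext i; simp only [mem_erase, mem_Icc, mem_insert]; omega
    rw [herase, sum_insert (by simp)]
    exact ⟨quarter_mul_sum_le_inv_sq_add_sum_erase _ p h01 hjs hgap_le,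
      inv_sq_add_sum_erase_le_two_mul_sum _ p j h01.le
        (mem_Icc.2 ⟨le_rfl, Nat.le_trans hj2 hjN⟩) hgap.symm hlt⟩

theorem stmt_9 (N : ℕ) (hN : 2 ≤ N) (p : ℕ → ℝ)
    (hmem : ∀ i ≤ N, p i ∈ Set.Icc (0 : ℝ) 1)
    (h01 : p 1 < p 0) (h12 : p 2 < p 1)
    (hmono : ∀ i j, 2 ≤ i → i ≤ j → j ≤ N → p j ≤ p i)
    (hgap : p 0 - p 1 = p 1 - p 2) :
    ∀ j, 1 ≤ j → j ≤ N →
      (1 / 4) * (∑ i ∈ Finset.Icc 2 N, ((p 1 - p i) ^ 2)⁻¹) ≤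
          (∑ i ∈ (Finset.Icc 1 N).erase j, ((p 0 - p i) ^ 2)⁻¹) ∧
        (∑ i ∈ (Finset.Icc 1 N).erase j, ((p 0 - p i) ^ 2)⁻¹) ≤
          2 * ∑ i ∈ Finset.Icc 2 N, ((p 1 - p i) ^ 2)⁻¹ :=
  stmt_9_general N p h01 hmono hgap
end

section
/- Let O be a unitary operator and P a self-adjoint orthogonal projection on a finite-dimensional complex Hilbert space such that (1−P)O = 1−P. Then for any vector φ and any density matrix σ, |⟨φ, (OσO† − σ)φ⟩| ≤ 2‖Pφ‖·‖φ‖·(Tr((OσO† − σ)²))^{1/2}. -/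
/-!
Write `Q = 1 - P` and `A = OσO† - σ`. Since `Q` is self-adjoint, `QO = Q` also gives `O†Q = Q`,
so `QAQ = 0` and therefore `A = PA + QAP`. Hence `⟨φ, Aφ⟩ = ⟨Pφ, Aφ⟩ + ⟨Qφ, A(Pφ)⟩`, and each term
is at most `‖Pφ‖ ‖φ‖ ‖A‖₂` by Cauchy–Schwarz, `‖Qφ‖ ≤ ‖φ‖` and `‖Av‖ ≤ ‖A‖₂ ‖v‖` for the
Frobenius norm `‖A‖₂`, which for self-adjoint `A` equals `Tr(A²)^{1/2}`.
-/

open Matrix ComplexOrder WithLp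

lemma IsSelfAdjoint.mul_conj_sub_self_mul_eq_zero {R : Type*} [Ring R] [StarRing R] {Q O : R}
    (hQ : IsSelfAdjoint Q) (hQO : Q * O = Q) (σ : R) : Q * (O * σ * star O - σ) * Q = 0 := by
  have hOQ : star O * Q = Q := by rw [← hQ.star_eq, ← star_mul, hQO]
  rw [mul_sub, sub_mul, ← mul_assoc, ← mul_assoc, hQO, mul_assoc (Q * σ), hOQ, sub_self]

namespace Matrix

variable {𝕜 : Type*} [RCLike 𝕜] {m n : Type*} [Fintype m] [Fintype n]

lemma re_star_dotProduct_self (v : n → 𝕜) :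
    RCLike.re (star v ⬝ᵥ v) = ‖toLp 2 v‖ ^ 2 := by
  rw [dotProduct_comm, ← EuclideanSpace.inner_toLp_toLp, ← inner_self_eq_norm_sq (𝕜 := 𝕜)]

lemma norm_star_dotProduct_le (u v : n → 𝕜) :
    ‖star u ⬝ᵥ v‖ ≤ ‖toLp 2 u‖ * ‖toLp 2 v‖ := by
  rw [dotProduct_comm, ← EuclideanSpace.inner_toLp_toLp]
  exact norm_inner_le_norm _ _

lemma norm_toLp_mulVec_le_of_isStarProjection [DecidableEq n] {Q : Matrix n n 𝕜}
    (hQ : IsStarProjection Q) (v : n → 𝕜) : ‖toLp 2 (Q *ᵥ v)‖ ≤ ‖toLp 2 v‖ := by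
  have hnorm : ‖toEuclideanCLM (n := n) (𝕜 := 𝕜) Q‖ ≤ 1 :=
    (hQ.map (toEuclideanCLM (n := n) (𝕜 := 𝕜))).norm_le
  simpa using (toEuclideanCLM (n := n) (𝕜 := 𝕜) Q).le_of_opNorm_le hnorm (toLp 2 v)

open scoped Matrix.Norms.Frobenius

lemma frobenius_norm_mulVec_le (A : Matrix m n 𝕜) (v : n → 𝕜) :
    ‖toLp 2 (A *ᵥ v)‖ ≤ ‖A‖ * ‖toLp 2 v‖ := by
  simpa only [← replicateCol_mulVec, frobenius_norm_replicateCol (ι := Unit)]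
    using frobenius_norm_mul A (replicateCol Unit v)

lemma re_trace_conjTranspose_mul_self_eq_frobenius_norm_sq (A : Matrix m n 𝕜) :
    RCLike.re (Aᴴ * A).trace = ‖A‖ ^ 2 := by
  rw [← star_vec_dotProduct_vec, re_star_dotProduct_self, EuclideanSpace.norm_eq,
    frobenius_norm_def, Real.sq_sqrt (by positivity), ← Real.sqrt_eq_rpow]
  simp only [Real.rpow_two]
  rw [Real.sq_sqrt (by positivity), Fintype.sum_prod_type_right]
  simp [vec]

lemma star_dotProduct_mulVec_of_isSelfAdjoint {M : Matrix n n 𝕜} (hM : IsSelfAdjoint M)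
    (u v : n → 𝕜) : star u ⬝ᵥ (M *ᵥ v) = star (M *ᵥ u) ⬝ᵥ v := by
  rw [star_mulVec, ← dotProduct_mulVec, ← star_eq_conjTranspose, hM.star_eq]

variable [DecidableEq n]

lemma norm_star_dotProduct_mulVec_le_of_isStarProjection {A P : Matrix n n 𝕜}
    (hP : IsStarProjection P) (hA : (1 - P) * A * (1 - P) = 0) (φ : n → 𝕜) :
    ‖star φ ⬝ᵥ (A *ᵥ φ)‖ ≤ 2 * ‖toLp 2 (P *ᵥ φ)‖ * ‖toLp 2 φ‖ * ‖A‖ := by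
  set Q := 1 - P
  have hsplit : A = P * A + Q * A * P := by
    calc A = P * A + Q * A * P + Q * A * Q := by simp only [Q]; noncomm_ring
      _ = P * A + Q * A * P := by rw [hA, add_zero]
  have hexpand : star φ ⬝ᵥ (A *ᵥ φ)
      = star (P *ᵥ φ) ⬝ᵥ (A *ᵥ φ) + star (Q *ᵥ φ) ⬝ᵥ (A *ᵥ (P *ᵥ φ)) := by
    conv_lhs => rw [hsplit]
    rw [add_mulVec, dotProduct_add, ← mulVec_mulVec, ← mulVec_mulVec, ← mulVec_mulVec,
      star_dotProduct_mulVec_of_isSelfAdjoint hP.isSelfAdjoint,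
      star_dotProduct_mulVec_of_isSelfAdjoint hP.one_sub.isSelfAdjoint]
  calc ‖star φ ⬝ᵥ (A *ᵥ φ)‖
      ≤ ‖toLp 2 (P *ᵥ φ)‖ * ‖toLp 2 (A *ᵥ φ)‖
          + ‖toLp 2 (Q *ᵥ φ)‖ * ‖toLp 2 (A *ᵥ (P *ᵥ φ))‖ := by
        rw [hexpand]
        exact (norm_add_le _ _).trans
          (add_le_add (norm_star_dotProduct_le _ _) (norm_star_dotProduct_le _ _))
    _ ≤ ‖toLp 2 (P *ᵥ φ)‖ * (‖A‖ * ‖toLp 2 φ‖)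
          + ‖toLp 2 φ‖ * (‖A‖ * ‖toLp 2 (P *ᵥ φ)‖) := by
        gcongr
        · exact frobenius_norm_mulVec_le _ _
        · exact norm_toLp_mulVec_le_of_isStarProjection hP.one_sub φ
        · exact frobenius_norm_mulVec_le _ _
    _ = 2 * ‖toLp 2 (P *ᵥ φ)‖ * ‖toLp 2 φ‖ * ‖A‖ := by ring

lemma norm_star_dotProduct_mulVec_le_sqrt_re_trace {A P : Matrix n n 𝕜}
    (hP : IsStarProjection P) (hAsa : IsSelfAdjoint A) (hA : (1 - P) * A * (1 - P) = 0)
    (φ : n → 𝕜) :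
    ‖star φ ⬝ᵥ (A *ᵥ φ)‖ ≤ 2 * √(RCLike.re (star (P *ᵥ φ) ⬝ᵥ (P *ᵥ φ))) *
      √(RCLike.re (star φ ⬝ᵥ φ)) * √(RCLike.re (A * A).trace) := by
  have hAA : A * A = Aᴴ * A := by rw [← star_eq_conjTranspose, hAsa.star_eq]
  simp only [hAA, re_star_dotProduct_self, re_trace_conjTranspose_mul_self_eq_frobenius_norm_sq,
    Real.sqrt_sq (norm_nonneg _)]
  exact norm_star_dotProduct_mulVec_le_of_isStarProjection hP hA φ

end Matrix

theorem stmt_10_general (n : ℕ) (O P σ : Matrix (Fin n) (Fin n) ℂ)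
    (hP : P.IsHermitian) (hP2 : P * P = P)
    (hPO : (1 - P) * O = 1 - P)
    (hσ : σ.PosSemidef)
    (φ : Fin n → ℂ) :
    ‖star φ ⬝ᵥ ((O * σ * Oᴴ - σ) *ᵥ φ)‖ ≤
      2 * Real.sqrt ((star (P *ᵥ φ) ⬝ᵥ (P *ᵥ φ)).re) *
        Real.sqrt ((star φ ⬝ᵥ φ).re) *
        Real.sqrt (((O * σ * Oᴴ - σ) * (O * σ * Oᴴ - σ)).trace.re) := by
  have hA : IsSelfAdjoint (O * σ * Oᴴ - σ) := (IsSelfAdjoint.conjugate hσ.1 O).sub hσ.1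
  have hProj : IsStarProjection P := ⟨hP2, hP⟩
  exact norm_star_dotProduct_mulVec_le_sqrt_re_trace hProj hA
    (hProj.one_sub.isSelfAdjoint.mul_conj_sub_self_mul_eq_zero hPO σ) φ

theorem stmt_10 (n : ℕ) (O P σ : Matrix (Fin n) (Fin n) ℂ)
    (hO : O ∈ Matrix.unitaryGroup (Fin n) ℂ)
    (hP : P.IsHermitian) (hP2 : P * P = P)
    (hPO : (1 - P) * O = 1 - P)
    (hσ : σ.PosSemidef) (hσtr : σ.trace = 1)
    (φ : Fin n → ℂ) :
    ‖star φ ⬝ᵥ ((O * σ * Oᴴ - σ) *ᵥ φ)‖ ≤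
      2 * Real.sqrt ((star (P *ᵥ φ) ⬝ᵥ (P *ᵥ φ)).re) *
        Real.sqrt ((star φ ⬝ᵥ φ).re) *
        Real.sqrt (((O * σ * Oᴴ - σ) * (O * σ * Oᴴ - σ)).trace.re) :=
  stmt_10_general n O P σ hP hP2 hPO hσ φ
end

section
/- Let θ = 2·arcsin(1/√N) for a natural number N ≥ 2 and let k be a natural number with π/(4θ) − 1/2 < k < 3π/(4θ) − 1/2. Then sin²((2k+1)/2 · θ) ≥ 1/2. -/
theorem stmt_19 (N : ℕ) (hN : 2 ≤ N) (k : ℕ)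
    (θ : ℝ) (hθ : θ = 2 * Real.arcsin (1 / Real.sqrt N))
    (hk1 : Real.pi / (4 * θ) - 1 / 2 < k)
    (hk2 : (k : ℝ) < 3 * Real.pi / (4 * θ) - 1 / 2) :
    Real.sin ((2 * k + 1) / 2 * θ) ^ 2 ≥ 1 / 2 := by
  have hNpos : (0:ℝ) < Real.sqrt N := Real.sqrt_pos.mpr (by positivity)
  have hθpos : 0 < θ := by
    rw [hθ]
    have : 0 < Real.arcsin (1 / Real.sqrt N) :=
      Real.arcsin_pos.mpr (by positivity)
    linarith
  have h1 : Real.pi / 2 < (2 * k + 1) * θ := by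
    have := (div_lt_iff₀ (by linarith : (0:ℝ) < 4 * θ)).mp (by linarith : Real.pi / (4*θ) < k + 1/2)
    nlinarith
  have h2 : (2 * k + 1) * θ < Real.pi + Real.pi / 2 := by
    have := (lt_div_iff₀ (by linarith : (0:ℝ) < 4 * θ)).mp (by linarith : (k : ℝ) + 1/2 < 3 * Real.pi / (4*θ))
    nlinarith
  have hcos : Real.cos (2 * ((2 * k + 1) / 2 * θ)) ≤ 0 := by
    have : 2 * ((2 * k + 1) / 2 * θ) = (2 * k + 1) * θ := by ring
    rw [this]
    exact Real.cos_nonpos_of_pi_div_two_le_of_le (le_of_lt h1) (le_of_lt h2)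
  have := Real.sin_sq_eq_half_sub ((2 * k + 1) / 2 * θ)
  linarith
end
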